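/- arXiv:1607.07787 — 3 statements merged into one kernel-verified Lean document; each statement's English description precedes it below -/
import Mathlib

section
/- If the norm of a Banach space X is measurable with respect to the σ-algebra generated by X* (the Baire σ-algebra of the weak topology), then X* is weak*-separable. -/
/-!
A set in the σ-algebra generated by a family of maps is already determined by countably many
of them. Since `ℝ` is countably separated, the norm therefore factors through countably many
functionals `T ⊆ X*`, and as `‖x‖ = ‖0‖` forces `x = 0`, no nonzero point is annihilated by `T`.
The functionals on `X*` that are weak*-continuous are the evaluations at points of `X`, so by
Hahn–Banach the span of `T` is weak*-dense; being the span of a countable set, it is separable.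
-/

open Filter Topology MeasureTheory

/-- The Baire σ-algebra of the weak topology of a Banach space: the σ-algebra on `X`
generated by the continuous linear functionals. -/
def weakBaire (X : Type*) [NormedAddCommGroup X] [NormedSpace ℝ X] : MeasurableSpace X :=
  ⨆ f : X →L[ℝ] ℝ, MeasurableSpace.comap f (borel ℝ)

theorem MeasurableSet.exists_countable_of_iSup_comap {ι α : Type*} {β : ι → Type*}
    {m : ∀ i, MeasurableSpace (β i)} {f : ∀ i, α → β i} {s : Set α}
    (hs : MeasurableSet[⨆ i, (m i).comap (f i)] s) :
    ∃ T : Set ι, T.Countable ∧ ∀ x y, (∀ i ∈ T, f i x = f i y) → (x ∈ s ↔ y ∈ s) := by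
  rw [MeasurableSpace.measurableSet_iSup] at hs
  induction hs with
  | basic s hs =>
    obtain ⟨i, t, -, rfl⟩ := hs
    exact ⟨{i}, Set.countable_singleton i, fun x y hxy => by simp [hxy i rfl]⟩
  | empty => exact ⟨∅, Set.countable_empty, fun x y _ => Iff.rfl⟩
  | compl s _ ih =>
    obtain ⟨T, hTc, hT⟩ := ih
    exact ⟨T, hTc, fun x y hxy => not_congr (hT x y hxy)⟩
  | iUnion s _ ih =>
    choose T hTc hT using ih
    refine ⟨⋃ n, T n, Set.countable_iUnion hTc, fun x y hxy => ?_⟩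
    simp only [Set.mem_iUnion]
    exact exists_congr fun n => hT n x y fun i hi => hxy i (Set.mem_iUnion.2 ⟨n, hi⟩)

theorem Measurable.exists_countable_of_iSup_comap {ι α γ : Type*} {β : ι → Type*}
    {m : ∀ i, MeasurableSpace (β i)} {f : ∀ i, α → β i} [MeasurableSpace γ]
    [MeasurableSpace.CountablySeparated γ] {g : α → γ}
    (hg : Measurable[⨆ i, (m i).comap (f i)] g) :
    ∃ T : Set ι, T.Countable ∧ ∀ x y, (∀ i ∈ T, f i x = f i y) → g x = g y := by
  obtain ⟨S, hSc, hSm, hS⟩ := exists_countable_separating γ MeasurableSet Set.univ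
  choose! T hTc hT using fun s (hs : s ∈ S) => (hg (hSm s hs)).exists_countable_of_iSup_comap
  refine ⟨⋃ s ∈ S, T s, hSc.biUnion hTc, fun x y hxy => ?_⟩
  exact hS _ trivial _ trivial fun s hs =>
    hT s hs x y fun i hi => hxy i (Set.mem_biUnion hs hi)

theorem Submodule.dense_of_forall_strongDual_eq_zero {E : Type*} [AddCommGroup E] [Module ℝ E]
    [TopologicalSpace E] [IsTopologicalAddGroup E] [ContinuousSMul ℝ E] [LocallyConvexSpace ℝ E]
    {V : Submodule ℝ E} (hV : ∀ φ : StrongDual ℝ E, (∀ v ∈ V, φ v = 0) → φ = 0) :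
    Dense (V : Set E) := by
  rw [Submodule.dense_iff_topologicalClosure_eq_top, eq_top_iff]
  intro g _
  by_contra hg
  obtain ⟨φ, u, hφu, hug⟩ := geometric_hahn_banach_closed_point
    V.topologicalClosure.convex V.isClosed_topologicalClosure hg
  have hφ : ∀ v ∈ V, φ v = 0 := fun v hv => by
    by_contra hne
    have hlt := hφu ((u / φ v) • v) (V.topologicalClosure.smul_mem _ (V.le_topologicalClosure hv))
    rw [map_smul, smul_eq_mul, div_mul_cancel₀ _ hne] at hlt
    exact lt_irrefl _ hlt
  have hu := hφu 0 V.topologicalClosure.zero_mem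
  rw [hV φ hφ] at hug hu
  simp only [zero_apply] at hug hu
  linarith

theorem WeakBilin.dense_span {E F : Type*} [AddCommGroup E] [Module ℝ E] [AddCommGroup F]
    [Module ℝ F] (B : E →ₗ[ℝ] F →ₗ[ℝ] ℝ) {s : Set (WeakBilin B)}
    (hs : ∀ y, (∀ x ∈ s, B x y = 0) → y = 0) :
    Dense (Submodule.span ℝ s : Set (WeakBilin B)) := by
  refine Submodule.dense_of_forall_strongDual_eq_zero fun φ hφ => ?_
  obtain ⟨y, rfl⟩ := LinearMap.dualEmbedding_surjective B φ
  rw [hs y fun x hx => hφ x (Submodule.subset_span hx), map_zero]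

theorem WeakBilin.exists_countable_dense {E F : Type*} [AddCommGroup E] [Module ℝ E]
    [AddCommGroup F] [Module ℝ F] (B : E →ₗ[ℝ] F →ₗ[ℝ] ℝ) {s : Set (WeakBilin B)}
    (hsc : s.Countable) (hs : ∀ y, (∀ x ∈ s, B x y = 0) → y = 0) :
    ∃ D : Set (WeakBilin B), D.Countable ∧ Dense D := by
  have : TopologicalSpace.SeparableSpace (WeakBilin B) := by
    rw [← TopologicalSpace.isSeparable_univ_iff, ← (dense_span B hs).closure_eq]
    exact hsc.isSeparable.span.closure
  exact TopologicalSpace.exists_countable_dense _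

theorem wStarSeparable_of_norm_weakBaire_measurable_general
    {X : Type*} [NormedAddCommGroup X] [NormedSpace ℝ X]
    (hmeas : Measurable[weakBaire X] (fun x : X => ‖x‖)) :
    ∃ D : Set (WeakDual ℝ X), D.Countable ∧ closure D = Set.univ := by
  obtain ⟨T, hTc, hT⟩ := hmeas.exists_countable_of_iSup_comap
  have hT0 : ∀ x : X, (∀ f ∈ T, f x = 0) → x = 0 := fun x hx =>
    norm_eq_zero.1 <| by simpa using hT x 0 fun f hf => by simpa using hx f hf
  obtain ⟨D, hDc, hD⟩ := WeakBilin.exists_countable_dense (topDualPairing ℝ X) hTc hT0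
  exact ⟨D, hDc, hD.closure_eq⟩

/-- If the norm of a Banach space `X` is measurable with respect to the σ-algebra
generated by `X*` (the Baire σ-algebra of the weak topology), then the dual `X*` is
weak*-separable. -/
theorem wStarSeparable_of_norm_weakBaire_measurable
    {X : Type*} [NormedAddCommGroup X] [NormedSpace ℝ X] [CompleteSpace X]
    (hmeas : Measurable[weakBaire X] (fun x : X => ‖x‖)) :
    ∃ D : Set (WeakDual ℝ X), D.Countable ∧ closure D = Set.univ :=
  wStarSeparable_of_norm_weakBaire_measurable_general hmeas
end

section
/- Orlicz–Pettis theorem: if a series ∑ x_n in a Banach space X is such that every subseries ∑_{n∈M} x_n converges weakly (for every M ⊆ ℕ), then every subseries converges in norm; i.e., the series is unconditionally norm convergent. -/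
/-!
If the partial sums of a weakly subseries convergent series were not Cauchy, one could cut the
series into consecutive blocks `y k = ∑_{c k ≤ n < c (k + 1)} x n` with `‖y k‖ ≥ ε`; the block
series is again weakly subseries convergent. So it suffices to show that weak subseries
convergence forces `y k → 0` in norm.

Sign patterns are points `t` of the Cantor group `ℕ → ZMod 2` with its Haar measure, and the weak
sum `f t` of `∑ r_k(t) y_k` (Rademacher signs `r_k`) exists for every `t`. The function `f` is
weakly measurable with separable range, hence strongly measurable by Pettis' theorem, and bounded
by the uniform boundedness principle. Orthonormality of the `r_k` gives `y n = ∫ r_n f`, and this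
tends to `0` by a Riemann–Lebesgue argument: Bessel's inequality for indicators, then density of
simple functions in `L¹`.
-/

open Filter Topology Classical MeasureTheory TopologicalSpace

section Pettis

variable {α X : Type*} [MeasurableSpace α] [NormedAddCommGroup X] [NormedSpace ℝ X]

theorem TopologicalSpace.IsSeparable.exists_countable_norming {s : Set X} (hs : IsSeparable s) :
    ∃ D : Set (StrongDual ℝ X), D.Countable ∧ (∀ φ ∈ D, ‖φ‖ ≤ 1) ∧
      ∀ z ∈ s, ∀ q : ℝ, (∀ φ ∈ D, φ z ≤ q) → ‖z‖ ≤ q := by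
  obtain ⟨c, hc, hsc⟩ := hs
  choose Φ hΦ1 hΦ2 using fun e : X => exists_dual_vector'' ℝ e
  refine ⟨Φ '' c, hc.image Φ, by simpa using fun e _ => hΦ1 e, fun z hz q hq => ?_⟩
  refine le_of_forall_pos_le_add fun δ hδ => ?_
  obtain ⟨e, hec, hze⟩ := Metric.mem_closure_iff.1 (hsc hz) (δ / 2) (half_pos hδ)
  rw [dist_eq_norm] at hze
  have hΦ : Φ e (e - z) ≤ ‖z - e‖ := (Real.le_norm_self _).trans
    ((Φ e).le_of_opNorm_le (hΦ1 e) _ |>.trans_eq (by rw [one_mul, norm_sub_rev]))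
  calc ‖z‖ ≤ ‖e‖ + ‖z - e‖ := norm_le_insert' z e
    _ = Φ e z + Φ e (e - z) + ‖z - e‖ := by simp [hΦ2]
    _ ≤ q + δ := by linarith [hq _ (Set.mem_image_of_mem Φ hec)]

theorem measurable_norm_of_weakly_measurable {g : α → X} (hg : IsSeparable (Set.range g))
    (hw : ∀ φ : StrongDual ℝ X, Measurable fun t => φ (g t)) : Measurable fun t => ‖g t‖ := by
  obtain ⟨D, hD, hD1, hnorm⟩ := hg.exists_countable_norming
  refine measurable_of_Iic fun q => ?_
  have : (fun t => ‖g t‖) ⁻¹' Set.Iic q = ⋂ φ ∈ D, {t | φ (g t) ≤ q} := by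
    ext t
    simp only [Set.mem_preimage, Set.mem_Iic, Set.mem_iInter, Set.mem_ofPred_eq]
    refine ⟨fun h φ hφ => ?_, hnorm _ ⟨t, rfl⟩ q⟩
    exact (Real.le_norm_self _).trans ((φ.le_of_opNorm_le (hD1 φ hφ) _).trans (by linarith))
  rw [this]
  exact .biInter hD fun φ _ => measurableSet_le (hw φ) measurable_const

theorem measurable_of_measurable_dist {E : Type*} [PseudoMetricSpace E] [MeasurableSpace E]
    [BorelSpace E] {f : α → E} {c : Set E} (hc : c.Countable) (hf : ∀ t, f t ∈ closure c)
    (hd : ∀ e ∈ c, Measurable fun t => dist (f t) e) : Measurable f := by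
  refine measurable_of_isOpen fun U hU => ?_
  have : f ⁻¹' U = ⋃ e ∈ c, ⋃ (q : ℚ) (_ : Metric.ball e q ⊆ U), {t | dist (f t) e < q} := by
    ext t
    simp only [Set.mem_preimage, Set.mem_iUnion, Set.mem_ofPred_eq, exists_prop]
    constructor
    · intro ht
      obtain ⟨ε, hε, hεU⟩ := Metric.isOpen_iff.1 hU _ ht
      obtain ⟨e, hec, hte⟩ := Metric.mem_closure_iff.1 (hf t) (ε / 2) (half_pos hε)
      obtain ⟨q, hq1, hq2⟩ := exists_rat_btwn hte
      exact ⟨e, hec, q, (Metric.ball_subset_ball' (by rw [dist_comm]; linarith)).trans hεU, hq1⟩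
    · rintro ⟨e, -, q, hqU, hq⟩
      exact hqU hq
  rw [this]
  exact .biUnion hc fun e he => .iUnion fun q => .iUnion fun _ =>
    measurableSet_lt (hd e he) measurable_const

/-- **Pettis measurability theorem.** -/
theorem stronglyMeasurable_of_weakly_measurable {f : α → X} (hf : IsSeparable (Set.range f))
    (hw : ∀ φ : StrongDual ℝ X, Measurable fun t => φ (f t)) : StronglyMeasurable f := by
  borelize X
  set Y := Submodule.span ℝ (Set.range f)
  have hY : IsSeparable (Y : Set X) := hf.span
  obtain ⟨c, hcY, hc, hYc⟩ := hY.exists_countable_dense_subset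
  have hfY (t : α) : f t ∈ Y := Submodule.subset_span ⟨t, rfl⟩
  refine stronglyMeasurable_iff_measurable_separable.2 ⟨?_, hf⟩
  refine measurable_of_measurable_dist hc (fun t => hYc (hfY t)) fun e he => ?_
  simp only [dist_eq_norm]
  refine measurable_norm_of_weakly_measurable (hY.mono ?_) fun φ => ?_
  · rintro _ ⟨t, rfl⟩
    exact Y.sub_mem (hfY t) (hcY he)
  · simpa only [map_sub] using (hw φ).sub_const (φ e)

end Pettis

section Duality

variable {X : Type*} [NormedAddCommGroup X] [NormedSpace ℝ X]

theorem exists_norm_le_of_forall_dual {ι : Type*} {v : ι → X}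
    (h : ∀ φ : StrongDual ℝ X, ∃ C, ∀ i, ‖φ (v i)‖ ≤ C) : ∃ C, ∀ i, ‖v i‖ ≤ C := by
  obtain ⟨C, hC⟩ :=
    banach_steinhaus (g := fun i => NormedSpace.inclusionInDoubleDual ℝ X (v i)) h
  exact ⟨C, fun i => (NormedSpace.inclusionInDoubleDualLi ℝ).norm_map (v i) ▸ hC i⟩

theorem Submodule.mem_of_forall_hasSum_dual {Y : Submodule ℝ X} (hY : IsClosed (Y : Set X))
    {u : ℕ → X} (hu : ∀ n, u n ∈ Y) {v : X}
    (h : ∀ φ : StrongDual ℝ X, HasSum (fun n => φ (u n)) (φ v)) : v ∈ Y := by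
  by_contra hv
  obtain ⟨φ, c, hφY, hφv⟩ := geometric_hahn_banach_closed_point Y.convex hY hv
  have : φ v ≤ c := le_of_tendsto' (h φ) fun s => by
    rw [← map_sum]
    exact (hφY _ (Y.sum_mem fun n _ => hu n)).le
  linarith

end Duality

theorem Orthonormal.tendsto_inner_atTop {𝕜 E : Type*} [RCLike 𝕜] [NormedAddCommGroup E]
    [InnerProductSpace 𝕜 E] {v : ℕ → E} (hv : Orthonormal 𝕜 v) (x : E) :
    Tendsto (fun n => inner 𝕜 (v n) x) atTop (𝓝 0) := by
  have h := (hv.inner_products_summable x).tendsto_atTop_zero.sqrt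
  simp only [Real.sqrt_sq (norm_nonneg _), Real.sqrt_zero] at h
  exact tendsto_zero_iff_norm_tendsto_zero.2 h

theorem tendsto_integral_smul_of_tendsto_setIntegral {α X : Type*} [MeasurableSpace α]
    [NormedAddCommGroup X] [NormedSpace ℝ X] [CompleteSpace X] {μ : Measure α} {r : ℕ → α → ℝ}
    (hr : ∀ n, AEStronglyMeasurable (r n) μ) (hr1 : ∀ n t, ‖r n t‖ ≤ 1)
    (hset : ∀ s, MeasurableSet s → μ s < ⊤ → Tendsto (fun n => ∫ t in s, r n t ∂μ) atTop (𝓝 0))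
    {f : α → X} (hf : Integrable f μ) :
    Tendsto (fun n => ∫ t, r n t • f t ∂μ) atTop (𝓝 0) := by
  have hint (n : ℕ) {g : α → X} (hg : Integrable g μ) : Integrable (fun t => r n t • g t) μ :=
    hg.bdd_smul 1 (hr n) (Eventually.of_forall (hr1 n))
  refine Integrable.induction (P := fun f => Tendsto (fun n => ∫ t, r n t • f t ∂μ) atTop (𝓝 0))
    ?_ ?_ ?_ ?_ hf
  · intro c s hs hμs
    have (n : ℕ) : ∫ t, r n t • s.indicator (fun _ => c) t ∂μ = (∫ t in s, r n t ∂μ) • c := by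
      simp_rw [← Set.indicator_smul_apply, integral_indicator hs, integral_smul_const]
    simpa [this] using (hset s hs hμs).smul_const c
  · intro f g _ hf hg hPf hPg
    simpa [smul_add, integral_add (hint _ hf) (hint _ hg)] using hPf.add hPg
  · have hlip (n : ℕ) : LipschitzWith 1 fun g : α →₁[μ] X => ∫ t, r n t • g t ∂μ := by
      refine LipschitzWith.of_dist_le_mul fun g h => ?_
      rw [NNReal.coe_one, one_mul, dist_eq_norm, ← integral_sub (hint n (L1.integrable_coeFn g))
        (hint n (L1.integrable_coeFn h)), L1.dist_eq_integral_dist]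
      simp only [dist_eq_norm]
      refine norm_integral_le_of_norm_le ((L1.integrable_coeFn g).sub
        (L1.integrable_coeFn h)).norm (Eventually.of_forall fun t => ?_)
      rw [← smul_sub, norm_smul]
      exact mul_le_of_le_one_left (norm_nonneg _) (hr1 n t)
    exact (LipschitzWith.uniformEquicontinuous _ 1 hlip).equicontinuous.isClosed_setOfPred_tendsto
      continuous_const
  · intro f g hfg _ hPf
    refine hPf.congr fun n => integral_congr_ae (hfg.mono fun t ht => ?_)
    simp only [ht]

noncomputable def cantorHaar : Measure (ℕ → ZMod 2) := Measure.addHaarMeasure ⊤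

instance : IsProbabilityMeasure cantorHaar :=
  ⟨Measure.addHaarMeasure_self (K₀ := ⊤)⟩

instance : cantorHaar.IsAddLeftInvariant := by
  unfold cantorHaar; infer_instance

def rademacher (n : ℕ) (t : ℕ → ZMod 2) : ℝ := if t n = 0 then 1 else -1

theorem continuous_rademacher (n : ℕ) : Continuous (rademacher n) :=
  (continuous_of_discreteTopology (f := fun v : ZMod 2 => if v = 0 then (1 : ℝ) else -1)).comp
    (continuous_apply n)

theorem norm_rademacher (n : ℕ) (t : ℕ → ZMod 2) : ‖rademacher n t‖ = 1 := by
  unfold rademacher; split_ifs <;> simp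

theorem rademacher_mul_self (n : ℕ) (t : ℕ → ZMod 2) : rademacher n t * rademacher n t = 1 := by
  unfold rademacher; split_ifs <;> simp

theorem rademacher_single_add_of_ne {n k : ℕ} (h : n ≠ k) (t : ℕ → ZMod 2) :
    rademacher n (Pi.single k 1 + t) = rademacher n t := by
  simp [rademacher, Pi.single_eq_of_ne h]

theorem rademacher_single_add_self (k : ℕ) (t : ℕ → ZMod 2) :
    rademacher k (Pi.single k 1 + t) = -rademacher k t := by
  have h : ∀ v : ZMod 2, 1 + v = 0 ↔ v ≠ 0 := by decide
  by_cases hk : t k = 0 <;> simp [rademacher, h, hk]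

theorem integral_rademacher_mul (n k : ℕ) :
    ∫ t, rademacher n t * rademacher k t ∂cantorHaar = if n = k then 1 else 0 := by
  split_ifs with h
  · simp [h, rademacher_mul_self]
  -- translating by the `k`-th unit vector flips the sign of `r k` and fixes `r n`
  · have hneg := integral_add_left_eq_self (μ := cantorHaar)
      (fun t => rademacher n t * rademacher k t) (Pi.single k 1)
    simp only [rademacher_single_add_of_ne h, rademacher_single_add_self, mul_neg,
      integral_neg] at hneg
    linarith

theorem integral_rademacher_mul_tsum {a : ℕ → ℝ} (ha : Summable a) (n : ℕ) :
    ∫ t, rademacher n t * ∑' k, rademacher k t * a k ∂cantorHaar = a n := by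
  have hint (k : ℕ) : Integrable (fun t => rademacher n t * (rademacher k t * a k)) cantorHaar :=
    ((continuous_rademacher n).mul ((continuous_rademacher k).mul continuous_const))
      |>.integrable_of_hasCompactSupport (.of_compactSpace _)
  simp_rw [← tsum_mul_left]
  rw [← integral_tsum_of_summable_integral_norm hint]
  · simp_rw [← mul_assoc, integral_mul_const, integral_rademacher_mul, ite_mul, one_mul,
      zero_mul]
    simp
  · simpa [norm_mul, norm_rademacher, -Real.norm_eq_abs] using ha.norm

theorem memLp_rademacher (n : ℕ) : MemLp (rademacher n) 2 cantorHaar :=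
  .of_bound (continuous_rademacher n).aestronglyMeasurable 1
    (Eventually.of_forall fun t => (norm_rademacher n t).le)

theorem orthonormal_rademacher : Orthonormal ℝ fun n => (memLp_rademacher n).toLp := by
  refine orthonormal_iff_ite.2 fun n k => ?_
  rw [L2.inner_def, ← integral_rademacher_mul]
  refine integral_congr_ae ?_
  filter_upwards [(memLp_rademacher n).coeFn_toLp, (memLp_rademacher k).coeFn_toLp] with t hn hk
  simp [hn, hk, mul_comm]

theorem tendsto_setIntegral_rademacher {s : Set (ℕ → ZMod 2)} (hs : MeasurableSet s) :
    Tendsto (fun n => ∫ t in s, rademacher n t ∂cantorHaar) atTop (𝓝 0) := by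
  refine (orthonormal_rademacher.tendsto_inner_atTop
    (indicatorConstLp 2 hs (measure_ne_top _ s) 1)).congr fun n => ?_
  rw [real_inner_comm, L2.inner_indicatorConstLp_one]
  exact setIntegral_congr_ae hs ((memLp_rademacher n).coeFn_toLp.mono fun t ht _ => ht)

section Series

variable {X : Type*} [NormedAddCommGroup X] [NormedSpace ℝ X] [CompleteSpace X]

theorem tendsto_integral_rademacher_smul {f : (ℕ → ZMod 2) → X} (hf : Integrable f cantorHaar) :
    Tendsto (fun n => ∫ t, rademacher n t • f t ∂cantorHaar) atTop (𝓝 0) :=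
  tendsto_integral_smul_of_tendsto_setIntegral
    (fun n => (continuous_rademacher n).aestronglyMeasurable) (fun n t => (norm_rademacher n t).le)
    (fun _ hs _ => tendsto_setIntegral_rademacher hs) hf

theorem tendsto_zero_of_hasSum_rademacher {y : ℕ → X} {f : (ℕ → ZMod 2) → X}
    (hf : ∀ t (φ : StrongDual ℝ X), HasSum (fun k => rademacher k t * φ (y k)) (φ (f t))) :
    Tendsto y atTop (𝓝 0) := by
  have hsum (φ : StrongDual ℝ X) : Summable fun k => φ (y k) := by
    simpa [rademacher] using (hf 0 φ).summable
  have hmeas (φ : StrongDual ℝ X) : Measurable fun t => φ (f t) :=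
    measurable_of_tendsto_metrizable (fun N => (continuous_finsetSum _ fun k _ =>
      (continuous_rademacher k).mul continuous_const).measurable)
      (tendsto_pi_nhds.2 fun t => (hf t φ).tendsto_sum_nat)
  set Y := (Submodule.span ℝ (Set.range y)).topologicalClosure
  have hfY (t : ℕ → ZMod 2) : f t ∈ Y :=
    Y.mem_of_forall_hasSum_dual (Submodule.isClosed_topologicalClosure _)
      (fun k => Y.smul_mem _ (Submodule.le_topologicalClosure _ (Submodule.subset_span ⟨k, rfl⟩)))
      (by simpa only [map_smul, smul_eq_mul] using hf t)
  have hsep : IsSeparable (Set.range f) := by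
    refine IsSeparable.mono ?_ (Set.range_subset_iff.2 hfY)
    rw [Submodule.topologicalClosure_coe]
    exact (Set.countable_range y).isSeparable.span.closure
  obtain ⟨C, hC⟩ := exists_norm_le_of_forall_dual fun φ => ⟨_, fun t =>
    (hf t φ).norm_le_of_bounded (hsum φ).norm.hasSum fun k => by
      rw [norm_mul, norm_rademacher, one_mul]⟩
  have hint : Integrable f cantorHaar := .of_bound
    (stronglyMeasurable_of_weakly_measurable hsep hmeas).aestronglyMeasurable C
    (Eventually.of_forall hC)
  have hcoef (n : ℕ) : ∫ t, rademacher n t • f t ∂cantorHaar = y n := by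
    refine (SeparatingDual.eq_iff_forall_dual_eq (R := ℝ)).2 fun φ => ?_
    have hint' : Integrable (fun t => rademacher n t • f t) cantorHaar :=
      hint.bdd_smul 1 (continuous_rademacher n).aestronglyMeasurable
        (Eventually.of_forall fun t => (norm_rademacher n t).le)
    rw [← φ.integral_comp_comm hint']
    simp_rw [map_smul, smul_eq_mul, ← (hf _ φ).tsum_eq]
    exact integral_rademacher_mul_tsum (hsum φ) n
  simpa only [hcoef] using tendsto_integral_rademacher_smul hint

end Series

section Subseries

open Finset

theorem sum_filter_blocks {E : Type*} [AddCommMonoid E] (f : ℕ → E) {c : ℕ → ℕ}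
    (hc : Monotone c) (hc0 : c 0 = 0) (A : Set ℕ) (K : ℕ) :
    ∑ k ∈ (range K).filter (· ∈ A), ∑ n ∈ Ico (c k) (c (k + 1)), f n =
      ∑ n ∈ (range (c K)).filter (· ∈ {n | ∃ k ∈ A, n ∈ Ico (c k) (c (k + 1))}), f n := by
  set B := {n | ∃ k ∈ A, n ∈ Ico (c k) (c (k + 1))}
  have hB (k n : ℕ) (hn : n ∈ Ico (c k) (c (k + 1))) : n ∈ B ↔ k ∈ A := by
    refine ⟨fun ⟨j, hjA, hj⟩ => ?_, fun hk => ⟨k, hk, hn⟩⟩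
    rw [mem_Ico] at hn hj
    obtain rfl : j = k := by
      by_contra hjk
      rcases Nat.lt_or_gt_of_ne hjk with h | h
      · have := hc (show j + 1 ≤ k by omega); omega
      · have := hc (show k + 1 ≤ j by omega); omega
    exact hjA
  rw [sum_filter, sum_filter]
  refine sum_range_induction _ (fun K => ∑ n ∈ range (c K), if n ∈ B then f n else 0)
    (by simp [hc0]) K (fun K _ => ?_)
  rw [← sum_range_add_sum_Ico _ (hc (K.le_add_right 1))]
  congr 1
  split_ifs with hK
  · exact sum_congr rfl fun n hn => by rw [if_pos ((hB K n hn).2 hK)]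
  · exact sum_eq_zero fun n hn => by rw [if_neg (mt (hB K n hn).1 hK)]

theorem summable_of_forall_tendsto_sum_filter {g : ℕ → ℝ}
    (h : ∀ M : Set ℕ, ∃ a, Tendsto (fun N => ∑ n ∈ (range N).filter (· ∈ M), g n) atTop (𝓝 a)) :
    Summable g := by
  have hpart (ε : ℝ) (hε : ε ≠ 0) (M : Set ℕ) (hM : ∀ n ∈ M, 0 ≤ ε * g n) :
      Summable (M.indicator g) := by
    obtain ⟨a, ha⟩ := h M
    rw [← summable_mul_left_iff hε]
    refine ((hasSum_iff_tendsto_nat_of_nonneg (fun n => ?_) (ε * a)).2 ?_).summable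
    · by_cases hn : n ∈ M <;> simp [hn, hM n]
    · simpa [sum_filter, Set.indicator_apply, mul_sum] using ha.const_mul ε
  have hpos := hpart 1 one_ne_zero {n | 0 ≤ g n} fun n hn => by simpa using hn
  have hneg := hpart (-1) (by norm_num) {n | 0 ≤ g n}ᶜ fun n hn => by simp at hn; linarith
  simpa [Set.indicator_self_add_compl] using hpos.add hneg

variable {X : Type*} [NormedAddCommGroup X] [NormedSpace ℝ X]

def WeaklySubseriesConvergent (x : ℕ → X) : Prop :=
  ∀ M : Set ℕ, ∃ a : X, ∀ φ : X →L[ℝ] ℝ,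
    Tendsto (fun N => ∑ n ∈ (range N).filter (· ∈ M), φ (x n)) atTop (𝓝 (φ a))

namespace WeaklySubseriesConvergent

variable {x : ℕ → X} (hx : WeaklySubseriesConvergent x)
include hx

theorem exists_hasSum_indicator (M : Set ℕ) :
    ∃ a : X, ∀ φ : StrongDual ℝ X, HasSum (M.indicator fun n => φ (x n)) (φ a) := by
  obtain ⟨a, ha⟩ := hx M
  refine ⟨a, fun φ => ?_⟩
  have hs : Summable (M.indicator fun n => φ (x n)) :=
    summable_of_forall_tendsto_sum_filter fun A => by
      obtain ⟨b, hb⟩ := hx (A ∩ M)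
      exact ⟨φ b, by simpa [sum_filter, Set.indicator_apply, ite_and] using hb φ⟩
  exact hs.hasSum_iff_tendsto_nat.2 (by simpa [sum_filter, Set.indicator_apply] using ha φ)

theorem exists_hasSum_rademacher : ∃ f : (ℕ → ZMod 2) → X, ∀ t (φ : StrongDual ℝ X),
    HasSum (fun k => rademacher k t * φ (x k)) (φ (f t)) := by
  choose S hS using hx.exists_hasSum_indicator
  refine ⟨fun t => S {k | t k = 0} - S {k | t k = 0}ᶜ, fun t φ => ?_⟩
  rw [map_sub]
  refine ((hS {k | t k = 0} φ).sub (hS {k | t k = 0}ᶜ φ)).congr_fun fun k => ?_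
  by_cases hk : t k = 0 <;> simp [rademacher, hk]

theorem tendsto_zero [CompleteSpace X] : Tendsto x atTop (𝓝 0) :=
  let ⟨_, hf⟩ := hx.exists_hasSum_rademacher
  tendsto_zero_of_hasSum_rademacher hf

theorem indicator (M : Set ℕ) : WeaklySubseriesConvergent (M.indicator x) := fun A => by
  obtain ⟨a, ha⟩ := hx (A ∩ M)
  exact ⟨a, fun φ => by simpa [sum_filter, Set.indicator_apply, ite_and, apply_ite φ] using ha φ⟩

theorem blocks {c : ℕ → ℕ} (hc : StrictMono c) (hc0 : c 0 = 0) :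
    WeaklySubseriesConvergent fun k => ∑ n ∈ Ico (c k) (c (k + 1)), x n := fun A => by
  obtain ⟨a, ha⟩ := hx {n | ∃ k ∈ A, n ∈ Ico (c k) (c (k + 1))}
  refine ⟨a, fun φ => ?_⟩
  simpa only [Function.comp_def, map_sum, sum_filter_blocks _ hc.monotone hc0] using
    (ha φ).comp hc.tendsto_atTop

theorem cauchySeq_sum [CompleteSpace X] : CauchySeq fun N => ∑ n ∈ range N, x n := by
  rw [Metric.cauchySeq_iff']
  by_contra! h
  obtain ⟨ε, hε, hfar⟩ := h
  choose g hgN hg using hfar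
  have hlt (N : ℕ) : N < g N :=
    (hgN N).lt_of_ne fun hN => by have := hg N; rw [← hN, dist_self] at this; linarith
  set c : ℕ → ℕ := fun k => g^[k] 0
  have hc : StrictMono c := strictMono_nat_of_lt_succ fun k => by
    simpa only [c, Function.iterate_succ_apply'] using hlt _
  have hblock (k : ℕ) : ε ≤ ‖∑ n ∈ Ico (c k) (c (k + 1)), x n‖ := by
    rw [sum_Ico_eq_sub _ (hc.monotone (k.le_add_right 1)), ← dist_eq_norm]
    simpa only [c, Function.iterate_succ_apply'] using hg (c k)
  obtain ⟨k, hk⟩ :=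
    ((tendsto_norm_zero.comp (hx.blocks hc rfl).tendsto_zero).eventually (gt_mem_nhds hε)).exists
  exact (hblock k).not_gt hk

end WeaklySubseriesConvergent

end Subseries

/-- **Orlicz–Pettis theorem.** If every subseries of `∑ x n` converges weakly in a
Banach space `X`, then every subseries converges in norm. -/
theorem orlicz_pettis {X : Type*} [NormedAddCommGroup X] [NormedSpace ℝ X]
    [CompleteSpace X] (x : ℕ → X)
    (hweak : ∀ M : Set ℕ, ∃ a : X, ∀ φ : X →L[ℝ] ℝ,
      Tendsto (fun N => ∑ n ∈ (Finset.range N).filter (· ∈ M), φ (x n)) atTop (𝓝 (φ a))) :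
    ∀ M : Set ℕ, ∃ a : X,
      Tendsto (fun N => ∑ n ∈ (Finset.range N).filter (· ∈ M), x n) atTop (𝓝 a) := by
  intro M
  obtain ⟨a, ha⟩ :=
    cauchySeq_tendsto_of_complete (WeaklySubseriesConvergent.indicator hweak M).cauchySeq_sum
  exact ⟨a, by simpa [Finset.sum_filter, Set.indicator_apply] using ha⟩
end

section
/- If f : [0,1] → X is Bochner integrable, then f is McShane integrable and the integrals coincide. -/
/-!
A free tagged partition of `[0,1]` is a McShane tagged partition of the one-dimensional box
`(0,1]` in the sense of `BoxIntegral`, and its Riemann sum is the corresponding box-integral sum.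
Mathlib shows (`MeasureTheory.IntegrableOn.hasBoxIntegral`, by approximating with simple
functions) that a Bochner integrable function has the Bochner integral as its box integral for
every integration filter without the Riemann condition, in particular for McShane's; the gauge
witnessing this box integral is therefore a McShane gauge for `f`.
-/

open Filter Topology MeasureTheory Set

variable {X : Type*} [NormedAddCommGroup X] [NormedSpace ℝ X]

/-- The Riemann sum of `f` for the partition `0 = p 0 < ⋯ < p n = 1` with tags `c`. -/
def riemannSum (f : ℝ → X) (n : ℕ) (p c : ℕ → ℝ) : X :=
  ∑ i ∈ Finset.range n, (p (i + 1) - p i) • f (c i)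

/-- `p, c` is a δ-fine *free* tagged partition of `[0,1]`: the tags `c i ∈ [0,1]` need
not belong to their intervals, but `[p i, p (i+1)] ⊆ (c i - δ (c i), c i + δ (c i))`. -/
def IsFreeTaggedPartition (n : ℕ) (p c : ℕ → ℝ) (δ : ℝ → ℝ) : Prop :=
  p 0 = 0 ∧ p n = 1 ∧ (∀ i < n, p i < p (i + 1)) ∧
  (∀ i < n, c i ∈ Icc (0 : ℝ) 1 ∧
    Icc (p i) (p (i + 1)) ⊆ Ioo (c i - δ (c i)) (c i + δ (c i)))

/-- `f : [0,1] → X` is McShane integrable with integral `x`. -/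
def McShaneIntegrable (f : ℝ → X) (x : X) : Prop :=
  ∀ ε > (0 : ℝ), ∃ δ : ℝ → ℝ, (∀ t, 0 < δ t) ∧
    ∀ (n : ℕ) (p c : ℕ → ℝ), IsFreeTaggedPartition n p c δ →
      ‖riemannSum f n p c - x‖ < ε

namespace BoxIntegral

namespace Box

def ofIoc (a b : ℝ) (h : a < b) : Box (Fin 1) :=
  ⟨fun _ => a, fun _ => b, fun _ => h⟩

theorem coe_eq_preimage_eval_zero (I : Box (Fin 1)) :
    (I : Set (Fin 1 → ℝ)) = (fun x => x 0) ⁻¹' Ioc (I.lower 0) (I.upper 0) := by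
  ext x
  simp only [mem_coe, mem_def, Fin.forall_fin_one, mem_preimage]

theorem Icc_eq_preimage_eval_zero (I : Box (Fin 1)) :
    Box.Icc I = (fun x => x 0) ⁻¹' Icc (I.lower 0) (I.upper 0) := by
  ext x
  simp only [Icc_def, Set.mem_Icc, Pi.le_def, Fin.forall_fin_one, mem_preimage]

theorem volume_apply_fin_one (I : Box (Fin 1)) :
    (volume : Measure (Fin 1 → ℝ)).toBoxAdditive I = I.upper 0 - I.lower 0 := by
  rw [volume_apply, Fin.prod_univ_one]

end Box

theorem hasIntegral_comp_eval_zero [CompleteSpace X] {f : ℝ → X} (I : Box (Fin 1))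
    (hf : IntegrableOn f (Ioc (I.lower 0) (I.upper 0))) {l : IntegrationParams}
    (hl : l.bRiemann = false) :
    HasIntegral I l (fun x => f (x 0)) (volume : Measure (Fin 1 → ℝ)).toBoxAdditive.toSMul
      (∫ t in Ioc (I.lower 0) (I.upper 0), f t) := by
  have he := volume_preserving_funUnique (Fin 1) ℝ
  have hemb := (MeasurableEquiv.funUnique (Fin 1) ℝ).measurableEmbedding
  have hI := I.coe_eq_preimage_eval_zero
  have hfI : IntegrableOn (fun x : Fin 1 → ℝ => f (x 0)) I := by
    rw [hI]
    exact (he.integrableOn_comp_preimage hemb).2 hf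
  convert hfI.hasBoxIntegral l hl using 1
  rw [hI]
  exact (he.setIntegral_preimage_emb hemb f _).symm

end BoxIntegral

section PartitionPoints

variable {β : Type*} [LinearOrder β] {n : ℕ} {p : ℕ → β}

theorem strictMonoOn_Iic_of_lt_add_one (hp : ∀ i < n, p i < p (i + 1)) :
    StrictMonoOn p (Iic n) :=
  strictMonoOn_Iic_of_lt_succ fun m hm => by simpa [Order.succ_eq_add_one] using hp m hm

theorem monotone_comp_min_of_lt_add_one (hp : ∀ i < n, p i < p (i + 1)) :
    Monotone fun i => p (min i n) := fun _ _ hij =>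
  (strictMonoOn_Iic_of_lt_add_one hp).monotoneOn (mem_Iic.2 (min_le_right _ _))
    (mem_Iic.2 (min_le_right _ _)) (min_le_min_right n hij)

theorem disjoint_Ioc_of_lt_add_one (hp : ∀ i < n, p i < p (i + 1)) {i j : ℕ} (hi : i < n)
    (hj : j < n) (hij : i ≠ j) : Disjoint (Ioc (p i) (p (i + 1))) (Ioc (p j) (p (j + 1))) := by
  simpa only [Function.onFun, Order.succ_eq_add_one, min_eq_left hi.le, min_eq_left hj.le,
    min_eq_left (show i + 1 ≤ n from hi), min_eq_left (show j + 1 ≤ n from hj)] using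
    (monotone_comp_min_of_lt_add_one hp).pairwise_disjoint_on_Ioc_succ hij

theorem biUnion_Ioc_eq_Ioc_of_lt_add_one (hp : ∀ i < n, p i < p (i + 1)) :
    ⋃ i < n, Ioc (p i) (p (i + 1)) = Ioc (p 0) (p n) := by
  have h := (monotone_comp_min_of_lt_add_one hp).biUnion_Ico_Ioc_map_succ 0 n
  simp only [Order.succ_eq_add_one, min_eq_left (Nat.zero_le n), min_self] at h
  rw [← h]
  ext t
  simp only [mem_iUnion, mem_Ico, Nat.zero_le, true_and, exists_prop]
  refine exists_congr fun i => and_congr_right fun hi => ?_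
  rw [min_eq_left hi.le, min_eq_left (show i + 1 ≤ n from hi)]

end PartitionPoints

namespace BoxIntegral

variable {n : ℕ} {p : ℕ → ℝ}

def Box.ofPoints (p : ℕ → ℝ) (hp : ∀ i < n, p i < p (i + 1)) (i : Fin n) : Box (Fin 1) :=
  ofIoc (p i) (p (i + 1)) (hp i i.2)

theorem Box.ofPoints_injective (hp : ∀ i < n, p i < p (i + 1)) :
    Function.Injective (ofPoints p hp) := fun i j hij =>
  Fin.ext <| (strictMonoOn_Iic_of_lt_add_one hp).injOn (mem_Iic.2 i.2.le) (mem_Iic.2 j.2.le)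
    (congrFun (congrArg lower hij) 0)

theorem Box.coe_ofPoints (hp : ∀ i < n, p i < p (i + 1)) (i : Fin n) :
    (ofPoints p hp i : Set (Fin 1 → ℝ)) = (fun x => x 0) ⁻¹' Ioc (p i) (p (i + 1)) :=
  (ofPoints p hp i).coe_eq_preimage_eval_zero

namespace TaggedPrepartition

open Classical in
noncomputable def ofPoints (I : Box (Fin 1)) (c : ℕ → ℝ) (hp : ∀ i < n, p i < p (i + 1))
    (h0 : p 0 = I.lower 0) (hn : p n = I.upper 0)
    (hc : ∀ i < n, c i ∈ Icc (I.lower 0) (I.upper 0)) : TaggedPrepartition I where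
  boxes := Finset.univ.image (Box.ofPoints p hp)
  le_of_mem' J hJ := by
    obtain ⟨i, -, rfl⟩ := Finset.mem_image.1 hJ
    have hmono := (strictMonoOn_Iic_of_lt_add_one hp).monotoneOn
    rw [← Box.coe_subset_coe, Box.coe_ofPoints, I.coe_eq_preimage_eval_zero, ← h0, ← hn]
    exact preimage_mono <| Ioc_subset_Ioc
      (hmono (mem_Iic.2 n.zero_le) (mem_Iic.2 i.2.le) (Nat.zero_le _))
      (hmono (mem_Iic.2 i.2) (mem_Iic.2 le_rfl) i.2)
  pairwiseDisjoint := by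
    rw [Finset.coe_image, Finset.coe_univ, image_univ]
    rintro - ⟨i, rfl⟩ - ⟨j, rfl⟩ hij
    have hij' : (i : ℕ) ≠ j := Fin.val_injective.ne (ne_of_apply_ne _ hij)
    simpa only [Function.onFun, Box.coe_ofPoints] using
      (disjoint_Ioc_of_lt_add_one hp i.2 j.2 hij').preimage _
  tag := Function.extend (Box.ofPoints p hp) (fun i _ => c i) fun _ => I.lower
  tag_mem_Icc J := by
    by_cases hJ : ∃ i, Box.ofPoints p hp i = J
    · obtain ⟨i, rfl⟩ := hJ
      rw [(Box.ofPoints_injective hp).extend_apply, I.Icc_eq_preimage_eval_zero]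
      exact hc i i.2
    · rw [Function.extend_apply' _ _ _ hJ]
      exact I.lower_mem_Icc

variable {I : Box (Fin 1)} {c : ℕ → ℝ} {hp : ∀ i < n, p i < p (i + 1)} {h0 : p 0 = I.lower 0}
  {hn : p n = I.upper 0} {hc : ∀ i < n, c i ∈ Icc (I.lower 0) (I.upper 0)}

open Classical in
theorem ofPoints_boxes :
    (ofPoints I c hp h0 hn hc).boxes = Finset.univ.image (Box.ofPoints p hp) :=
  rfl

theorem mem_ofPoints {J : Box (Fin 1)} :
    J ∈ ofPoints I c hp h0 hn hc ↔ ∃ i, Box.ofPoints p hp i = J := by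
  simp [ofPoints, mem_mk]

theorem ofPoints_tag (i : Fin n) :
    (ofPoints I c hp h0 hn hc).tag (Box.ofPoints p hp i) = fun _ => c i :=
  (Box.ofPoints_injective hp).extend_apply (fun i _ => c i) (fun _ => I.lower) i

theorem isPartition_ofPoints : (ofPoints I c hp h0 hn hc).IsPartition := by
  rw [isPartition_iff_iUnion_eq]
  ext x
  simp only [mem_iUnion, mem_ofPoints, exists_exists_eq_and]
  simp only [← Box.mem_coe, Box.coe_ofPoints, I.coe_eq_preimage_eval_zero,
    mem_preimage, ← h0, ← hn, ← biUnion_Ioc_eq_Ioc_of_lt_add_one hp, Set.mem_iUnion,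
    Fin.exists_iff, exists_prop]

theorem isSubordinate_ofPoints {r : (Fin 1 → ℝ) → Ioi (0 : ℝ)}
    (hr : ∀ i < n, Icc (p i) (p (i + 1)) ⊆ Metric.closedBall (c i) (r fun _ => c i)) :
    (ofPoints I c hp h0 hn hc).IsSubordinate r := by
  intro J hJ
  obtain ⟨i, rfl⟩ := mem_ofPoints.1 hJ
  intro x hx
  rw [Box.Icc_eq_preimage_eval_zero] at hx
  rw [ofPoints_tag, Metric.mem_closedBall, ← (IsometryEquiv.funUnique (Fin 1) ℝ).dist_eq]
  exact hr i i.2 hx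

theorem integralSum_ofPoints (g : (Fin 1 → ℝ) → X) :
    integralSum g (volume : Measure (Fin 1 → ℝ)).toBoxAdditive.toSMul (ofPoints I c hp h0 hn hc) =
      ∑ i ∈ Finset.range n, (p (i + 1) - p i) • g fun _ => c i := by
  classical
  rw [integralSum, ofPoints_boxes,
    Finset.sum_image fun i _ j _ hij => Box.ofPoints_injective hp hij,
    ← Fin.sum_univ_eq_sum_range (fun i => (p (i + 1) - p i) • g fun _ => c i)]
  refine Finset.sum_congr rfl fun i _ => ?_
  rw [BoxAdditiveMap.toSMul_apply, Box.volume_apply_fin_one, ofPoints_tag]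
  rfl

end TaggedPrepartition

end BoxIntegral

open BoxIntegral TaggedPrepartition in
/-- Every Bochner integrable function `f : [0,1] → X` is McShane integrable, and the
McShane integral coincides with the Bochner integral. -/
theorem mcShane_of_bochner [CompleteSpace X] (f : ℝ → X)
    (hf : IntegrableOn f (Icc (0 : ℝ) 1) volume) :
    McShaneIntegrable f (∫ t in Icc (0 : ℝ) 1, f t) := by
  let I := Box.ofIoc 0 1 one_pos
  have hI : HasIntegral I IntegrationParams.McShane (fun x => f (x 0))
      (volume : Measure (Fin 1 → ℝ)).toBoxAdditive.toSMul (∫ t in Icc (0 : ℝ) 1, f t) := by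
    rw [integral_Icc_eq_integral_Ioc]
    exact hasIntegral_comp_eval_zero I (hf.mono_set Ioc_subset_Icc_self) rfl
  intro ε hε
  obtain ⟨r, -, hr⟩ := hasIntegral_iff.1 hI (ε / 2) (half_pos hε)
  refine ⟨fun t => r 1 fun _ => t, fun t => (r 1 fun _ => t).2, ?_⟩
  rintro n p c ⟨h0, hn, hp, hfine⟩
  let π : TaggedPrepartition I := ofPoints I c hp h0 hn fun i hi => (hfine i hi).1
  have hsub : π.IsSubordinate (r 1) := isSubordinate_ofPoints fun i hi =>
    (hfine i hi).2.trans (Real.ball_eq_Ioo _ _ ▸ Metric.ball_subset_closedBall)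
  have hsum : integralSum (fun x => f (x 0)) volume.toBoxAdditive.toSMul π =
      riemannSum f n p c := integralSum_ofPoints _
  calc ‖riemannSum f n p c - ∫ t in Icc (0 : ℝ) 1, f t‖
      = dist (integralSum (fun x => f (x 0)) volume.toBoxAdditive.toSMul π)
          (∫ t in Icc (0 : ℝ) 1, f t) := by rw [hsum, dist_eq_norm]
    -- McShane's filter imposes neither the Henstock nor the distortion condition.
    _ ≤ ε / 2 := hr 1 π ⟨hsub, nofun, nofun, nofun⟩ isPartition_ofPoints
    _ < ε := half_lt_self hε
end
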